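/- arXiv:1608.07600 — 2 statements merged into one kernel-verified Lean document; each statement's English description precedes it below -/
import Mathlib

section
/- Let (R, m) be a Noetherian local ring, I an ideal of R, and x an element of R such that dim R/(I + (x)) = dim R/I - 1 (i.e., x is a parameter modulo I and dim R/I = 1 means the quotients below are finite length). Assume R/(I,x) has finite length. Then for every n ≥ 1, (1/n)·length(R/(I, x^n)) ≥ (1/(n+1))·length(R/(I, x^{n+1})). -/
open Filter IsLocalRing

noncomputable section

variable {R : Type*} [CommRing R]

/-- The `q`-th Frobenius power `I^{[q]}` of an ideal `I`. -/
def fpow (I : Ideal R) (q : ℕ) : Ideal R := Ideal.span ((fun x => x ^ q) '' (I : Set R))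

/-- The length of `R ⧸ I` as an `R`-module, as a natural number. -/
def qlen (I : Ideal R) : ℕ := ((Order.krullDim (Submodule R (R ⧸ I))).unbotD 0).toNat

/-- The length of `R ⧸ I` as an `R`-module, in `ℕ∞`. -/
def lenE (I : Ideal R) : ℕ∞ := (Order.krullDim (Submodule R (R ⧸ I))).unbotD 0

/-- The tight closure `I*` of an ideal `I` in a ring of characteristic `p`. -/
def tightClosure (p : ℕ) (I : Ideal R) : Ideal R :=
  Ideal.span {x | ∃ c : R, (∀ P ∈ minimalPrimes R, c ∉ P) ∧
    ∃ e₀ : ℕ, ∀ e ≥ e₀, c * x ^ p ^ e ∈ fpow I (p ^ e)}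

/-- `c` is a test element: `c` avoids all minimal primes and for every ideal `I`,
`x ∈ I*` iff `c x^q ∈ I^{[q]}` for all `q = p^e`. -/
def IsTestElement (p : ℕ) (c : R) : Prop :=
  (∀ P ∈ minimalPrimes R, c ∉ P) ∧
    ∀ (I : Ideal R) (x : R), x ∈ tightClosure p I ↔ ∀ e : ℕ, c * x ^ p ^ e ∈ fpow I (p ^ e)

end

/-!
Write `ℓ n` for the length of `R/(I, xⁿ)`. Multiplication by `xⁿ` gives exact sequences
`0 → R/((I, xⁿ⁺¹) : xⁿ) → R/(I, xⁿ⁺¹) → R/(I, xⁿ) → 0`, so `ℓ n = ∑_{k<n} d k` with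
`d k` the length of `R/((I, xᵏ⁺¹) : xᵏ)`. These colon ideals grow with `k`, so `d` is antitone,
and the averages `ℓ n / n` of an antitone sequence decrease. All lengths involved are finite
because `d k ≤ d 0 = ℓ 1`.
-/

open Finset Ideal

theorem Antitone.nsmul_sum_range_succ_le {M : Type*} [AddCommMonoid M] [PartialOrder M]
    [IsOrderedAddMonoid M] {d : ℕ → M} (hd : Antitone d) (n : ℕ) :
    n • ∑ k ∈ range (n + 1), d k ≤ (n + 1) • ∑ k ∈ range n, d k := by
  have hlast : n • d n ≤ ∑ k ∈ range n, d k := by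
    simpa using card_nsmul_le_sum (range n) d (d n) fun k hk => hd (mem_range.mp hk).le
  calc n • ∑ k ∈ range (n + 1), d k = n • ∑ k ∈ range n, d k + n • d n := by
        rw [sum_range_succ, nsmul_add]
    _ ≤ n • ∑ k ∈ range n, d k + ∑ k ∈ range n, d k := by gcongr
    _ = (n + 1) • ∑ k ∈ range n, d k := by rw [succ_nsmul]

theorem Submodule.length_eq_length_add_length_quotient {R M : Type*} [Ring R] [AddCommGroup M]
    [Module R M] (N : Submodule R M) :
    Module.length R M = Module.length R N + Module.length R (M ⧸ N) :=
  Module.length_eq_add_of_exact N.subtype N.mkQ N.injective_subtype N.mkQ_surjective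
    (LinearMap.exact_subtype_mkQ N)

namespace Ideal

variable {R : Type*} [CommRing R]

theorem ker_toSpanSingleton_mk_eq_colon (J : Ideal R) (y : R) :
    LinearMap.ker (LinearMap.toSpanSingleton R (R ⧸ J) (Submodule.Quotient.mk y)) =
      J.colon {y} := by
  ext r
  rw [LinearMap.mem_ker, LinearMap.toSpanSingleton_apply, ← Submodule.Quotient.mk_smul,
    Submodule.Quotient.mk_eq_zero, Submodule.mem_colon_singleton]

theorem length_quotient_eq_length_quotient_colon_add (J : Ideal R) (y : R) :
    Module.length R (R ⧸ J) =
      Module.length R (R ⧸ J.colon {y}) + Module.length R (R ⧸ (J ⊔ span {y})) := by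
  set φ := LinearMap.toSpanSingleton R (R ⧸ J) (Submodule.Quotient.mk y)
  have hrange : (Submodule.span R {y}).map J.mkQ = LinearMap.range φ := by
    rw [Submodule.map_span, Set.image_singleton, LinearMap.span_singleton_eq_range]
    rfl
  rw [Submodule.length_eq_length_add_length_quotient ((Submodule.span R {y}).map J.mkQ),
    (Submodule.quotientQuotientEquivQuotientSup J (span {y})).length_eq, hrange,
    ← (φ.quotKerEquivRange).length_eq, ker_toSpanSingleton_mk_eq_colon]

theorem length_quotient_le_of_le {J J' : Ideal R} (h : J ≤ J') :
    Module.length R (R ⧸ J') ≤ Module.length R (R ⧸ J) :=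
  Module.length_le_of_surjective (Submodule.factor h) (Submodule.factor_surjective h)

theorem sup_span_pow_succ_colon_le (I : Ideal R) (x : R) (k : ℕ) :
    (I ⊔ span {x ^ (k + 1)}).colon {x ^ k} ≤ (I ⊔ span {x ^ (k + 2)}).colon {x ^ (k + 1)} := by
  intro r hr
  rw [Submodule.mem_colon_singleton, smul_eq_mul] at hr ⊢
  have hmul : r * x ^ k * x ∈ (I ⊔ span {x ^ (k + 1)}) * span {x} :=
    mul_mem_mul hr (mem_span_singleton_self x)
  rw [sup_mul, span_singleton_mul_span_singleton, ← pow_succ] at hmul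
  have hle : I * span {x} ⊔ span {x ^ (k + 2)} ≤ I ⊔ span {x ^ (k + 2)} :=
    sup_le_sup_right mul_le_left _
  rw [pow_succ x k, ← mul_assoc]
  exact hle hmul

theorem sup_span_pow_succ_sup_span_pow (I : Ideal R) (x : R) (n : ℕ) :
    I ⊔ span {x ^ (n + 1)} ⊔ span {x ^ n} = I ⊔ span {x ^ n} := by
  rw [sup_assoc, sup_eq_right.mpr (span_singleton_le_span_singleton.mpr (pow_dvd_pow x n.le_succ))]

theorem length_quotient_sup_span_pow_eq_sum (I : Ideal R) (x : R) (n : ℕ) :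
    Module.length R (R ⧸ (I ⊔ span {x ^ n})) =
      ∑ k ∈ range n, Module.length R (R ⧸ (I ⊔ span {x ^ (k + 1)}).colon {x ^ k}) := by
  induction n with
  | zero => simp
  | succ n ih =>
    rw [sum_range_succ, ← ih, length_quotient_eq_length_quotient_colon_add _ (x ^ n),
      sup_span_pow_succ_sup_span_pow, add_comm]

end Ideal

theorem ENat.toNat_div_le_toNat_div_of_nsmul_le {a b : ℕ∞} {m n : ℕ} (hm : 0 < m) (hn : 0 < n)
    (ha : a ≠ ⊤) (hb : b ≠ ⊤) (h : n • b ≤ m • a) :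
    (b.toNat : ℝ) / m ≤ (a.toNat : ℝ) / n := by
  lift a to ℕ using ha
  lift b to ℕ using hb
  rw [nsmul_eq_mul, nsmul_eq_mul] at h
  have h' : n * b ≤ m * a := by exact_mod_cast h
  rw [ENat.toNat_natCast, ENat.toNat_natCast, div_le_div_iff₀ (by positivity) (by positivity),
    mul_comm (b : ℝ), mul_comm (a : ℝ)]
  exact_mod_cast h'

theorem qlen_eq_toNat_length {R : Type*} [CommRing R] (J : Ideal R) :
    qlen J = (Module.length R (R ⧸ J)).toNat := by
  rw [qlen, ← Module.coe_length, WithBot.unbotD_coe]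

theorem stmt0_general {R : Type*} [CommRing R]
    (I : Ideal R) (x : R)
    (hfl : IsFiniteLength R (R ⧸ (I ⊔ Ideal.span {x}))) :
    ∀ n : ℕ, 1 ≤ n →
      (qlen (I ⊔ Ideal.span {x ^ (n + 1)}) : ℝ) / (n + 1) ≤
        (qlen (I ⊔ Ideal.span {x ^ n}) : ℝ) / n := by
  intro n hn
  set d : ℕ → ℕ∞ := fun k => Module.length R (R ⧸ (I ⊔ span {x ^ (k + 1)}).colon {x ^ k})
  have hd : Antitone d := antitone_nat_of_succ_le fun k =>
    length_quotient_le_of_le (sup_span_pow_succ_colon_le I x k)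
  have hd₀ : d 0 ≠ ⊤ := by
    have h₁ := length_quotient_sup_span_pow_eq_sum I x 1
    rw [pow_one, sum_range_one] at h₁
    rw [show d 0 = _ from h₁.symm]
    exact Module.length_ne_top_iff.mpr hfl
  have hsum : ∀ m, ∑ k ∈ range m, d k ≠ ⊤ := fun m =>
    ne_top_of_le_ne_top (by
      rw [card_range, nsmul_eq_mul]; exact WithTop.mul_ne_top (ENat.natCast_ne_top m) hd₀)
      (sum_le_card_nsmul _ d _ fun k _ => hd (Nat.zero_le k))
  rw [qlen_eq_toNat_length, qlen_eq_toNat_length, length_quotient_sup_span_pow_eq_sum,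
    length_quotient_sup_span_pow_eq_sum]
  exact_mod_cast ENat.toNat_div_le_toNat_div_of_nsmul_le (Nat.succ_pos n) hn (hsum n)
    (hsum (n + 1)) (hd.nsmul_sum_range_succ_le n)

/-- In a Noetherian local ring, if `dim R/(I,x) = dim R/I - 1 = 0`
and `R/(I,x)` has finite length, then `n ↦ length(R/(I, xⁿ))/n` is non-increasing. -/
theorem stmt0 {R : Type*} [CommRing R] [IsNoetherianRing R] [IsLocalRing R]
    (I : Ideal R) (x : R)
    (hdimI : ringKrullDim (R ⧸ I) = 1)
    (hdimx : ringKrullDim (R ⧸ (I ⊔ Ideal.span {x})) = 0)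
    (hfl : IsFiniteLength R (R ⧸ (I ⊔ Ideal.span {x}))) :
    ∀ n : ℕ, 1 ≤ n →
      (qlen (I ⊔ Ideal.span {x ^ (n + 1)}) : ℝ) / (n + 1) ≤
        (qlen (I ⊔ Ideal.span {x ^ n}) : ℝ) / n :=
  stmt0_general I x hfl
end

section
/- Let (R, m) be a Noetherian local ring of characteristic p > 0 with a test element c, and let p be a prime ideal of R. If for every q = p^e there exists a p-primary ideal I_q with p^{[q]} ⊆ I_q ⊆ (p^{[q]})*, then (p^{[q]})* is p-primary for every q. -/
open Filter IsLocalRing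

/-!
If `ab ∈ I*` with `b ∉ P`, then for every `q` the element `c a^q b^q` lies in the `P`-primary
ideal `J_q ⊇ I^{[q]}`, hence `c a^q ∈ J_q ⊆ (I^{[q]})*` and `c² a^q ∈ I^{[q]}`; so `a ∈ I*` with
the multiplier `c²`. Taking `a = 1` shows that `I*` contains no power of an element outside `P`,
because by Krull's intersection theorem `I*` is a proper ideal. Applied to `I = P^{[q]}`, using
`(P^{[q]})^{[q']} = P^{[qq']}`, this gives the theorem.
-/

section

variable {R : Type*} [CommRing R]

lemma pow_mem_fpow {I : Ideal R} {x : R} (hx : x ∈ I) (q : ℕ) : x ^ q ∈ fpow I q :=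
  Ideal.subset_span ⟨x, hx, rfl⟩

lemma fpow_one (I : Ideal R) : fpow I 1 = I := by
  simp only [fpow, pow_one, Set.image_id', Ideal.span_eq]

lemma fpow_le_pow (I : Ideal R) (n : ℕ) : fpow I n ≤ I ^ n :=
  Ideal.span_le.mpr <| by
    rintro _ ⟨x, hx, rfl⟩
    exact Ideal.pow_mem_pow hx n

lemma fpow_fpow {p : ℕ} (hp : p.Prime) [CharP R p] (I : Ideal R) (a b : ℕ) :
    fpow (fpow I (p ^ a)) (p ^ b) = fpow I (p ^ (a + b)) := by
  have : Fact p.Prime := ⟨hp⟩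
  have pow_pow (z : R) : (z ^ p ^ a) ^ p ^ b = z ^ p ^ (a + b) := by rw [← pow_mul, ← pow_add]
  refine le_antisymm (Ideal.span_le.mpr ?_) (Ideal.span_le.mpr ?_)
  · rintro _ ⟨y, hy, rfl⟩
    simp only [SetLike.mem_coe] at hy ⊢
    induction hy using Submodule.span_induction with
    | mem x hx =>
      obtain ⟨z, hz, rfl⟩ := hx
      simpa only [pow_pow] using pow_mem_fpow hz (p ^ (a + b))
    | zero => simp [zero_pow (pow_ne_zero b hp.ne_zero)]
    | add x y _ _ hx hy => simpa only [add_pow_char_pow] using Ideal.add_mem _ hx hy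
    | smul r x _ hx => simpa only [smul_eq_mul, mul_pow] using Ideal.mul_mem_left _ _ hx
  · rintro _ ⟨z, hz, rfl⟩
    simpa only [SetLike.mem_coe, pow_pow] using pow_mem_fpow (pow_mem_fpow hz (p ^ a)) (p ^ b)

lemma mul_notMem_minimalPrimes {a b : R} (ha : ∀ Q ∈ minimalPrimes R, a ∉ Q)
    (hb : ∀ Q ∈ minimalPrimes R, b ∉ Q) : ∀ Q ∈ minimalPrimes R, a * b ∉ Q :=
  fun Q hQ hab => (hQ.1.1.mem_or_mem hab).elim (ha Q hQ) (hb Q hQ)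

lemma mem_tightClosure_of_forall {p : ℕ} {I : Ideal R} {x c : R}
    (hc : ∀ Q ∈ minimalPrimes R, c ∉ Q) (hx : ∀ e : ℕ, c * x ^ p ^ e ∈ fpow I (p ^ e)) :
    x ∈ tightClosure p I :=
  Ideal.subset_span ⟨c, hc, 0, fun e _ => hx e⟩

namespace IsTestElement

variable {p : ℕ} {c : R}

lemma mul_mem_of_mem_tightClosure (hc : IsTestElement p c) {I : Ideal R} {x : R}
    (hx : x ∈ tightClosure p I) : c * x ∈ I := by
  simpa only [pow_zero, pow_one, fpow_one] using (hc.2 I x).mp hx 0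

lemma ne_zero [Nontrivial R] (hc : IsTestElement p c) : c ≠ 0 := by
  obtain ⟨Q, hQ⟩ := Ideal.nonempty_minimalPrimes (R := R) (I := ⊥) bot_ne_top
  rintro rfl
  exact hc.1 Q hQ Q.zero_mem

lemma tightClosure_ne_top [IsNoetherianRing R] [IsLocalRing R] (hp : 1 < p)
    (hc : IsTestElement p c) {I : Ideal R} (hI : I ≠ ⊤) : tightClosure p I ≠ ⊤ := by
  intro htop
  have hcI (e : ℕ) : c ∈ I ^ p ^ e := by
    simpa using fpow_le_pow I _ ((hc.2 I 1).mp (htop ▸ Submodule.mem_top) e)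
  have hc_bot : c ∈ ⨅ n : ℕ, I ^ n :=
    Ideal.mem_iInf.mpr fun n => Ideal.pow_le_pow_right (Nat.lt_pow_self hp).le (hcI n)
  rw [Ideal.iInf_pow_eq_bot_of_isLocalRing I hI, Ideal.mem_bot] at hc_bot
  exact hc.ne_zero hc_bot

section Sandwich

variable (hc : IsTestElement p c) {I P : Ideal R}
  (hJ : ∀ e : ℕ, ∃ J : Ideal R, J.IsPrimary ∧ J.radical = P ∧
    fpow I (p ^ e) ≤ J ∧ J ≤ tightClosure p (fpow I (p ^ e)))
include hc hJ

lemma mem_tightClosure_of_mul_mem {a b : R} (hab : a * b ∈ tightClosure p I) (hb : b ∉ P) :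
    a ∈ tightClosure p I := by
  refine mem_tightClosure_of_forall (mul_notMem_minimalPrimes hc.1 hc.1) fun e => ?_
  obtain ⟨J, hJ_primary, rfl, hIJ, hJI⟩ := hJ e
  have hcab : c * a ^ p ^ e * b ^ p ^ e ∈ J := by
    rw [mul_assoc, ← mul_pow]
    exact hIJ ((hc.2 I _).mp hab e)
  have hbq : b ^ p ^ e ∉ J.radical := fun h => hb (J.radical_isRadical ⟨_, h⟩)
  have hca : c * a ^ p ^ e ∈ J :=
    ((Ideal.isPrimary_iff.mp hJ_primary).2 hcab).resolve_right hbq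
  simpa only [mul_assoc] using hc.mul_mem_of_mem_tightClosure (hJI hca)

lemma tightClosure_isPrimary [IsNoetherianRing R] [IsLocalRing R] (hp : 1 < p) :
    (tightClosure p I).IsPrimary ∧ (tightClosure p I).radical = P := by
  obtain ⟨J, hJ_primary, rfl, hIJ, hJI⟩ := hJ 0
  simp only [pow_zero, fpow_one] at hIJ hJI
  have hne : tightClosure p I ≠ ⊤ :=
    hc.tightClosure_ne_top hp fun hI => hJ_primary.ne_top (top_le_iff.mp (hI ▸ hIJ))
  have hrad : (tightClosure p I).radical = J.radical := by
    refine le_antisymm (fun x ⟨n, hx⟩ => ?_) (Ideal.radical_mono hJI)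
    by_contra hxJ
    have hxn : x ^ n ∉ J.radical := fun h => hxJ (J.radical_isRadical ⟨n, h⟩)
    exact hne ((Ideal.eq_top_iff_one _).mpr
      (mem_tightClosure_of_mul_mem hc hJ (by rwa [one_mul]) hxn))
  refine ⟨Ideal.isPrimary_iff.mpr ⟨hne, fun {a b} hab => ?_⟩, hrad⟩
  by_cases hb : b ∈ J.radical
  · exact Or.inr (hrad ▸ hb)
  · exact Or.inl (mem_tightClosure_of_mul_mem hc hJ hab hb)

end Sandwich

end IsTestElement

end

theorem stmt5_general {R : Type*} [CommRing R] [IsNoetherianRing R] [IsLocalRing R]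
    (p : ℕ) (hp : p.Prime) [CharP R p] (c : R) (hc : IsTestElement p c)
    (P : Ideal R)
    (h : ∀ e : ℕ, ∃ Iq : Ideal R, Iq.IsPrimary ∧ Iq.radical = P ∧
      fpow P (p ^ e) ≤ Iq ∧ Iq ≤ tightClosure p (fpow P (p ^ e))) :
    ∀ e : ℕ, (tightClosure p (fpow P (p ^ e))).IsPrimary ∧
      (tightClosure p (fpow P (p ^ e))).radical = P := by
  intro e₀
  refine hc.tightClosure_isPrimary (fun e => ?_) hp.one_lt
  simpa only [fpow_fpow hp] using h (e₀ + e)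

/-- If for each `q = p^e` there is a `P`-primary ideal `I_q` with
`P^{[q]} ⊆ I_q ⊆ (P^{[q]})*`, then `(P^{[q]})*` is `P`-primary for every `q`. -/
theorem stmt5 {R : Type*} [CommRing R] [IsNoetherianRing R] [IsLocalRing R]
    (p : ℕ) (hp : p.Prime) [CharP R p] (c : R) (hc : IsTestElement p c)
    (P : Ideal R) (hP : P.IsPrime)
    (h : ∀ e : ℕ, ∃ Iq : Ideal R, Iq.IsPrimary ∧ Iq.radical = P ∧
      fpow P (p ^ e) ≤ Iq ∧ Iq ≤ tightClosure p (fpow P (p ^ e))) :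
    ∀ e : ℕ, (tightClosure p (fpow P (p ^ e))).IsPrimary ∧
      (tightClosure p (fpow P (p ^ e))).radical = P :=
  stmt5_general p hp c hc P h
end
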